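/- arXiv:2310.00316 — 7 statements merged into one kernel-verified Lean document; each statement's English description precedes it below -/
import Mathlib

section
/- Let C be a pointed category with two torsion theories (T₁, F₁) and (T₂, F₂) such that T₂ ⊆ T₁. Then for every morphism f : X → Y with X ∈ T₁ and Y ∈ F₂, f factors through an object of Z := T₁ ∩ F₂. -/
open CategoryTheory CategoryTheory.Limits

universe v u

variable {C : Type u} [Category.{v} C]

/-- A morphism is `Z`-trivial if it factors through an object of `Z`. -/
def IsTrivialMor (Z : Set C) {X Y : C} (f : X ⟶ Y) : Prop :=
  ∃ (W : C) (p : X ⟶ W) (q : W ⟶ Y), W ∈ Z ∧ p ≫ q = f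

/-- `ε` is a `Z`-kernel of `f`. -/
def IsZKernel (Z : Set C) {K A B : C} (ε : K ⟶ A) (f : A ⟶ B) : Prop :=
  IsTrivialMor Z (ε ≫ f) ∧
    ∀ ⦃Y : C⦄ (l : Y ⟶ A), IsTrivialMor Z (l ≫ f) → ∃! l' : Y ⟶ K, l' ≫ ε = l

/-- `π` is a `Z`-cokernel of `f`. -/
def IsZCokernel (Z : Set C) {A B Q : C} (f : A ⟶ B) (π : B ⟶ Q) : Prop :=
  IsTrivialMor Z (f ≫ π) ∧
    ∀ ⦃Y : C⦄ (l : B ⟶ Y), IsTrivialMor Z (f ≫ l) → ∃! l' : Q ⟶ Y, π ≫ l' = l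

/-- `0 → A → X → B → 0` is a short exact sequence: `f` is a kernel of `g`
and `g` is a cokernel of `f`. -/
structure IsShortExactSeq [HasZeroMorphisms C] {A X B : C} (f : A ⟶ X) (g : X ⟶ B) : Prop where
  zero : f ≫ g = 0
  ker : ∀ ⦃Y : C⦄ (l : Y ⟶ X), l ≫ g = 0 → ∃! l' : Y ⟶ A, l' ≫ f = l
  coker : ∀ ⦃Y : C⦄ (l : X ⟶ Y), f ≫ l = 0 → ∃! l' : B ⟶ Y, g ≫ l' = l

/-- A torsion theory in a pointed category. -/
structure TorsionTheory (C : Type u) [Category.{v} C] [HasZeroMorphisms C] :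
    Type (max u v) where
  T : Set C
  F : Set C
  repleteT : ∀ ⦃X Y : C⦄, (X ≅ Y) → X ∈ T → Y ∈ T
  repleteF : ∀ ⦃X Y : C⦄, (X ≅ Y) → X ∈ F → Y ∈ F
  hom_zero : ∀ ⦃X Y : C⦄, X ∈ T → Y ∈ F → ∀ f : X ⟶ Y, f = 0
  exists_seq : ∀ X : C, ∃ (A B : C) (f : A ⟶ X) (g : X ⟶ B),
      A ∈ T ∧ B ∈ F ∧ IsShortExactSeq f g

/-- A pretorsion theory, with class of trivial objects `T ∩ F`. -/
structure PretorsionTheory (C : Type u) [Category.{v} C] : Type (max u v) where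
  T : Set C
  F : Set C
  repleteT : ∀ ⦃X Y : C⦄, (X ≅ Y) → X ∈ T → Y ∈ T
  repleteF : ∀ ⦃X Y : C⦄, (X ≅ Y) → X ∈ F → Y ∈ F
  hom_triv : ∀ ⦃X Y : C⦄, X ∈ T → Y ∈ F → ∀ f : X ⟶ Y, IsTrivialMor (T ∩ F) f
  exists_seq : ∀ X : C, ∃ (A B : C) (f : A ⟶ X) (g : X ⟶ B),
      A ∈ T ∧ B ∈ F ∧ IsZKernel (T ∩ F) f g ∧ IsZCokernel (T ∩ F) f g

/-- `A ∗ B`: objects that are extensions of an object of `A` by an object of `B`. -/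
def extClass [HasZeroMorphisms C] (A B : Set C) : Set C :=
  {X | ∃ (A₀ B₀ : C) (f : A₀ ⟶ X) (g : X ⟶ B₀), A₀ ∈ A ∧ B₀ ∈ B ∧ IsShortExactSeq f g}

/-- A Serre subcategory: closed under subobjects, quotients and extensions. -/
def SerreSub [HasZeroMorphisms C] (S : Set C) : Prop :=
  (∀ ⦃A B : C⦄ (m : A ⟶ B), Mono m → B ∈ S → A ∈ S) ∧
  (∀ ⦃A B : C⦄ (e : A ⟶ B), Epi e → A ∈ S → B ∈ S) ∧
  (∀ ⦃A X B : C⦄ (f : A ⟶ X) (g : X ⟶ B), IsShortExactSeq f g → A ∈ S → B ∈ S → X ∈ S)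

/-- The hom relation identifying morphisms whose difference is `Z`-trivial. -/
def trivRel [Preadditive C] (Z : Set C) : HomRel C :=
  fun {_ _} f g => IsTrivialMor Z (f - g)

theorem stmt1 [HasZeroObject C] [HasZeroMorphisms C]
    (TT₁ TT₂ : TorsionTheory C) (h : TT₂.T ⊆ TT₁.T)
    {X Y : C} (f : X ⟶ Y) (hX : X ∈ TT₁.T) (hY : Y ∈ TT₂.F) :
    IsTrivialMor (TT₁.T ∩ TT₂.F) f := by
  obtain ⟨A, B, i, g, hA, hB, hse⟩ := TT₂.exists_seq X
  -- f kills the torsion part A (since A ∈ T₂, Y ∈ F₂), so f factors through B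
  obtain ⟨q, hq, -⟩ := hse.coker f (TT₂.hom_zero hA hY (i ≫ f))
  -- show B ∈ TT₁.T using the SES for B w.r.t. TT₁
  obtain ⟨A', B', i', g', hA', hB', hse'⟩ := TT₁.exists_seq B
  -- g' = 0 since g ≫ g' = 0 (X ∈ T₁, B' ∈ F₁) and g is epi (cokernel)
  obtain ⟨l, -, hluniq⟩ := hse.coker (g ≫ g') (by
    rw [← Category.assoc, hse.zero, zero_comp])
  have hg' : g' = 0 := by
    rw [hluniq g' rfl, hluniq 0 (by show g ≫ 0 = g ≫ g'; rw [comp_zero, TT₁.hom_zero hX hB' (g ≫ g')])]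
  -- then 𝟙 B factors through A', giving B ≅ A'
  obtain ⟨r, hr, -⟩ := hse'.ker (𝟙 B) (by rw [hg', comp_zero])
  have hir : i' ≫ r = 𝟙 A' := by
    obtain ⟨l', -, hl'⟩ := hse'.ker i' hse'.zero
    rw [hl' (i' ≫ r) (by show (i' ≫ r) ≫ i' = i'; rw [Category.assoc, hr, Category.comp_id]),
      hl' (𝟙 A') (by show 𝟙 A' ≫ i' = i'; rw [Category.id_comp])]
  have hBT : B ∈ TT₁.T := TT₁.repleteT ⟨i', r, hir, hr⟩ hA'
  exact ⟨B, g, q, ⟨hBT, hB⟩, hq⟩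
end

section
/- Let C be a pointed category with two torsion theories (T₁, F₁) and (T₂, F₂) such that T₂ ⊆ T₁, and set Z := T₁ ∩ F₂. Then for every object X, the sequence T₁X → X → F₂X (where T₁X → X is the canonical torsion monomorphism of (T₁,F₁) and X → F₂X the canonical torsion-free epimorphism of (T₂,F₂)) is a short Z-exact sequence; hence (T₁, F₂) is a pretorsion theory with class of trivial objects Z. -/
open CategoryTheory CategoryTheory.Limits

universe v u

variable {C : Type u} [Category.{v} C]

section Aux

variable [HasZeroMorphisms C]

lemma ses_mono {A X B : C} {f : A ⟶ X} {g : X ⟶ B} (hs : IsShortExactSeq f g) :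
    Mono f := ⟨fun {Y} a b hab => by
  obtain ⟨l', -, hu⟩ := hs.ker (a ≫ f) (by rw [Category.assoc, hs.zero, comp_zero])
  rw [hu a rfl, hu b hab.symm]⟩

lemma ses_epi {A X B : C} {f : A ⟶ X} {g : X ⟶ B} (hs : IsShortExactSeq f g) :
    Epi g := ⟨fun {Y} a b hab => by
  obtain ⟨l', -, hu⟩ := hs.coker (g ≫ a) (by rw [← Category.assoc, hs.zero, zero_comp])
  rw [hu a rfl, hu b hab.symm]⟩

lemma mem_T_of_hom_zero (TT : TorsionTheory C) {X : C}
    (hX : ∀ F ∈ TT.F, ∀ u : X ⟶ F, u = 0) : X ∈ TT.T := by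
  obtain ⟨A, B, f, g, hA, hB, hs⟩ := TT.exists_seq X
  have hg : g = 0 := hX B hB g
  obtain ⟨l, hl, -⟩ := hs.ker (𝟙 X) (by rw [hg, comp_zero])
  have : Mono f := ses_mono hs
  have hfl : f ≫ l = 𝟙 A := by
    rw [← cancel_mono f, Category.assoc, hl, Category.id_comp, Category.comp_id]
  exact TT.repleteT ⟨f, l, hfl, hl⟩ hA

end Aux

theorem stmt2 [HasZeroObject C] [HasZeroMorphisms C]
    (TT₁ TT₂ : TorsionTheory C) (h : TT₂.T ⊆ TT₁.T) :
    (∀ (X A B₁ A₂ B : C) (f : A ⟶ X) (g₁ : X ⟶ B₁) (f₂ : A₂ ⟶ X) (g : X ⟶ B),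
      A ∈ TT₁.T → B₁ ∈ TT₁.F → IsShortExactSeq f g₁ →
      A₂ ∈ TT₂.T → B ∈ TT₂.F → IsShortExactSeq f₂ g →
      IsZKernel (TT₁.T ∩ TT₂.F) f g ∧ IsZCokernel (TT₁.T ∩ TT₂.F) f g) ∧
    ∃ P : PretorsionTheory C, P.T = TT₁.T ∧ P.F = TT₂.F := by
  have htriv : ∀ {X Y : C}, X ∈ TT₁.T → Y ∈ TT₂.F → ∀ u : X ⟶ Y,
      IsTrivialMor (TT₁.T ∩ TT₂.F) u := by
    intro X Y hX hY u
    obtain ⟨A₂, B₂, f₂, g₂, hA₂, hB₂, hs₂⟩ := TT₂.exists_seq X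
    have h0 : f₂ ≫ u = 0 := TT₂.hom_zero hA₂ hY (f₂ ≫ u)
    obtain ⟨q, hq, -⟩ := hs₂.coker u h0
    refine ⟨B₂, g₂, q, ⟨?_, hB₂⟩, hq⟩
    apply mem_T_of_hom_zero TT₁
    intro F hF' v
    have hE : Epi g₂ := ses_epi hs₂
    have hz : g₂ ≫ v = 0 := TT₁.hom_zero hX hF' _
    exact (cancel_epi g₂).1 (by rw [hz, comp_zero])
  have main : ∀ (X A B₁ A₂ B : C) (f : A ⟶ X) (g₁ : X ⟶ B₁) (f₂ : A₂ ⟶ X) (g : X ⟶ B),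
      A ∈ TT₁.T → B₁ ∈ TT₁.F → IsShortExactSeq f g₁ →
      A₂ ∈ TT₂.T → B ∈ TT₂.F → IsShortExactSeq f₂ g →
      IsZKernel (TT₁.T ∩ TT₂.F) f g ∧ IsZCokernel (TT₁.T ∩ TT₂.F) f g := by
    intro X A B₁ A₂ B f g₁ f₂ g hA hB₁ hs₁ hA₂ hB hs
    have hfg : IsTrivialMor (TT₁.T ∩ TT₂.F) (f ≫ g) := htriv hA hB _
    have hf₂g₁ : f₂ ≫ g₁ = 0 := TT₁.hom_zero (h hA₂) hB₁ _
    obtain ⟨u, hu, -⟩ := hs.coker g₁ hf₂g₁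
    obtain ⟨v, hv, -⟩ := hs₁.ker f₂ hf₂g₁
    constructor
    · refine ⟨hfg, ?_⟩
      rintro Y l ⟨W, p, q, ⟨hWT, hWF⟩, hpq⟩
      have hqu : q ≫ u = 0 := TT₁.hom_zero hWT hB₁ _
      have hl : l ≫ g₁ = 0 := by
        calc l ≫ g₁ = l ≫ g ≫ u := by rw [hu]
          _ = (p ≫ q) ≫ u := by rw [← Category.assoc, ← hpq]
          _ = 0 := by rw [Category.assoc, hqu, comp_zero]
      exact hs₁.ker l hl
    · refine ⟨hfg, ?_⟩
      rintro Y l ⟨W, p, q, ⟨hWT, hWF⟩, hpq⟩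
      have hvp : v ≫ p = 0 := TT₂.hom_zero hA₂ hWF _
      have hl : f₂ ≫ l = 0 := by
        calc f₂ ≫ l = v ≫ f ≫ l := by rw [← hv, Category.assoc]
          _ = v ≫ p ≫ q := by rw [hpq]
          _ = 0 := by rw [← Category.assoc, hvp, zero_comp]
      exact hs.coker l hl
  refine ⟨main, ⟨⟨TT₁.T, TT₂.F, TT₁.repleteT, TT₂.repleteF,
    fun X Y hX hY f => htriv hX hY f, ?_⟩, rfl, rfl⟩⟩
  intro X
  obtain ⟨A, B₁, f, g₁, hA, hB₁, hs₁⟩ := TT₁.exists_seq X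
  obtain ⟨A₂, B, f₂, g, hA₂, hB, hs⟩ := TT₂.exists_seq X
  exact ⟨A, B, f, g, hA, hB, main X A B₁ A₂ B f g₁ f₂ g hA hB₁ hs₁ hA₂ hB hs⟩
end

section
/- Let C be a pointed category with two torsion theories (T₁, F₁) and (T₂, F₂). If (T₁, F₂) is a pretorsion theory with class of trivial objects T₁ ∩ F₂, then T₂ ⊆ T₁. -/
open CategoryTheory CategoryTheory.Limits

universe v u

variable {C : Type u} [Category.{v} C]

open ZeroObject in
lemma zero_mem_T [HasZeroObject C] [HasZeroMorphisms C] (TT : TorsionTheory C) :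
    (0 : C) ∈ TT.T := by
  obtain ⟨A, B, f, g, hA, hB, hse⟩ := TT.exists_seq (0 : C)
  refine TT.repleteT ?_ hA
  have huniq : ∀ (Y : C) (m m' : Y ⟶ A), m = m' := by
    intro Y m m'
    have hm : m ≫ f = (0 : Y ⟶ (0 : C)) := (isZero_zero C).eq_of_tgt _ _
    have hm' : m' ≫ f = (0 : Y ⟶ (0 : C)) := (isZero_zero C).eq_of_tgt _ _
    obtain ⟨l', hl', hlu⟩ := hse.ker (0 : Y ⟶ (0 : C)) (by simp)
    exact (hlu m hm).trans (hlu m' hm').symm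
  have hterm : IsTerminal A :=
    IsTerminal.ofUniqueHom
      (fun Y => (hse.ker (0 : Y ⟶ (0 : C)) (by simp)).exists.choose)
      (fun Y m => huniq Y m _)
  exact hterm.uniqueUpToIso (isZero_zero C).isTerminal

open ZeroObject in
lemma zero_mem_F [HasZeroObject C] [HasZeroMorphisms C] (TT : TorsionTheory C) :
    (0 : C) ∈ TT.F := by
  obtain ⟨A, B, f, g, hA, hB, hse⟩ := TT.exists_seq (0 : C)
  refine TT.repleteF ?_ hB
  have huniq : ∀ (Y : C) (m m' : B ⟶ Y), m = m' := by
    intro Y m m'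
    have hm : g ≫ m = (0 : (0 : C) ⟶ Y) := (isZero_zero C).eq_of_src _ _
    have hm' : g ≫ m' = (0 : (0 : C) ⟶ Y) := (isZero_zero C).eq_of_src _ _
    obtain ⟨l', hl', hlu⟩ := hse.coker (0 : (0 : C) ⟶ Y) (by simp)
    exact (hlu m hm).trans (hlu m' hm').symm
  have hinit : IsInitial B :=
    IsInitial.ofUniqueHom
      (fun Y => (hse.coker (0 : (0 : C) ⟶ Y) (by simp)).exists.choose)
      (fun Y m => huniq Y m _)
  exact hinit.uniqueUpToIso (isZero_zero C).isInitial

open ZeroObject in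
theorem stmt4 [HasZeroObject C] [HasZeroMorphisms C]
    (TT₁ TT₂ : TorsionTheory C)
    (P : PretorsionTheory C) (hT : P.T = TT₁.T) (hF : P.F = TT₂.F) :
    TT₂.T ⊆ TT₁.T := by
  intro X hX
  obtain ⟨A, B, f, g, hA, hB, hker, _⟩ := P.exists_seq X
  have hz : (0 : C) ∈ P.T ∩ P.F :=
    ⟨hT ▸ zero_mem_T TT₁, hF ▸ zero_mem_F TT₂⟩
  have hg0 : g = 0 := TT₂.hom_zero hX (hF ▸ hB) g
  have hgtriv : IsTrivialMor (P.T ∩ P.F) ((𝟙 X) ≫ g) :=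
    ⟨0, 0, 0, hz, by simp [hg0]⟩
  obtain ⟨l, hl, hluniq⟩ := hker.2 (𝟙 X) hgtriv
  obtain ⟨m, hm, hmuniq⟩ := hker.2 f hker.1
  have h1 : f ≫ l = 𝟙 A := by
    have e1 := hmuniq (f ≫ l) (by simp only [Category.assoc, hl, Category.comp_id])
    have e2 := hmuniq (𝟙 A) (by simp)
    rw [e1, e2]
  exact TT₁.repleteT ⟨f, l, h1, hl⟩ (hT ▸ hA)
end

section
/- Let C be a pointed category in which every morphism admits an (epi, mono)-factorisation, let (U, V) be a torsion theory in C, and let S be a Serre subcategory (full subcategory closed under subobjects, quotients and extensions). Then (U ∗ S) ∩ (S ∗ V) = S. -/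
open CategoryTheory CategoryTheory.Limits

universe v u

variable {C : Type u} [Category.{v} C]

theorem stmt5 [HasZeroObject C] [HasZeroMorphisms C]
    (hFac : ∀ ⦃X Y : C⦄ (f : X ⟶ Y),
      ∃ (I : C) (e : X ⟶ I) (m : I ⟶ Y), Epi e ∧ Mono m ∧ e ≫ m = f)
    (TT : TorsionTheory C) (S : Set C) (hS : SerreSub S) :
    extClass TT.T S ∩ extClass S TT.F = S := by
  obtain ⟨Z, hZ⟩ := HasZeroObject.zero (C := C)
  apply subset_antisymm
  · rintro X ⟨⟨U₀, S₀, u, s, hU₀, hS₀, hse1⟩, ⟨S₁, V₀, s', v, hS₁, hV₀, hse2⟩⟩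
    have huv : u ≫ v = 0 := TT.hom_zero hU₀ hV₀ _
    obtain ⟨t, ht, -⟩ := hse2.ker u huv
    have hu_mono : Mono u := ⟨fun {Y} a b hab => by
      have h1 : (a ≫ u) ≫ s = 0 := by rw [Category.assoc, hse1.zero, comp_zero]
      obtain ⟨l', -, hl'⟩ := hse1.ker (a ≫ u) h1
      exact (hl' a rfl).trans (hl' b hab.symm).symm⟩
    have ht_mono : Mono t := ⟨fun {Y} a b hab => by
      apply hu_mono.right_cancellation
      rw [← ht, ← Category.assoc, hab, Category.assoc]⟩
    exact hS.2.2 u s hse1 (hS.1 t ht_mono hS₁) hS₀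
  · intro X hX
    -- first show the zero object is in both T and F
    obtain ⟨A, B, f, g, hA, hB, hse⟩ := TT.exists_seq Z
    have hfz : f = 0 := hZ.eq_of_tgt f 0
    have hgz : g = 0 := hZ.eq_of_src g 0
    obtain ⟨l, -, hlu⟩ := hse.ker f hse.zero
    have hidA : 𝟙 A = 0 :=
      (hlu (𝟙 A) (by simp)).trans (hlu 0 (by simp [hfz])).symm
    have hAZ : IsZero A := (IsZero.iff_id_eq_zero A).mpr hidA
    obtain ⟨m, -, hmu⟩ := hse.coker g hse.zero
    have hidB : 𝟙 B = 0 :=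
      (hmu (𝟙 B) (by simp)).trans (hmu 0 (by simp [hgz])).symm
    have hBZ : IsZero B := (IsZero.iff_id_eq_zero B).mpr hidB
    have hZT : Z ∈ TT.T := TT.repleteT (hAZ.iso hZ) hA
    have hZF : Z ∈ TT.F := TT.repleteF (hBZ.iso hZ) hB
    constructor
    · refine ⟨Z, X, 0, 𝟙 X, hZT, hX, ?_, ?_, ?_⟩
      · simp
      · intro Y l hl
        refine ⟨0, by simpa using hl.symm, fun y _ => hZ.eq_of_tgt y 0⟩
      · intro Y l _
        exact ⟨l, by simp, fun y hy => by simpa using hy⟩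
    · refine ⟨X, Z, 𝟙 X, 0, hX, hZF, ?_, ?_, ?_⟩
      · simp
      · intro Y l _
        exact ⟨l, by simp, fun y hy => by simpa using hy⟩
      · intro Y l hl
        refine ⟨0, by simpa using hl.symm, fun y _ => hZ.eq_of_src y 0⟩
end

section
/- Let C be a pointed category in which every morphism admits an (epi, mono)-factorisation, let (U, V) be a torsion theory, and let S be a Serre subcategory. Then every morphism from an object of U ∗ S to an object of S ∗ V factors through an object of S. -/
open CategoryTheory CategoryTheory.Limits

universe v u

variable {C : Type u} [Category.{v} C]

lemma IsShortExactSeq.mono_f [HasZeroMorphisms C] {A X B : C} {f : A ⟶ X} {g : X ⟶ B}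
    (h : IsShortExactSeq f g) : Mono f := by
  constructor
  intro Z a b hab
  have hz : (b ≫ f) ≫ g = 0 := by rw [Category.assoc, h.zero, comp_zero]
  obtain ⟨l', _, hu⟩ := h.ker (b ≫ f) hz
  exact (hu a hab).trans (hu b rfl).symm

lemma IsShortExactSeq.epi_g [HasZeroMorphisms C] {A X B : C} {f : A ⟶ X} {g : X ⟶ B}
    (h : IsShortExactSeq f g) : Epi g := by
  constructor
  intro Z a b hab
  have hz : f ≫ g ≫ b = 0 := by rw [← Category.assoc, h.zero, zero_comp]
  obtain ⟨l', _, hu⟩ := h.coker (g ≫ b) hz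
  exact (hu a hab).trans (hu b rfl).symm

theorem stmt7 [HasZeroObject C] [HasZeroMorphisms C]
    (hFac : ∀ ⦃X Y : C⦄ (f : X ⟶ Y),
      ∃ (I : C) (e : X ⟶ I) (m : I ⟶ Y), Epi e ∧ Mono m ∧ e ≫ m = f)
    (TT : TorsionTheory C) (S : Set C) (hS : SerreSub S)
    {X Y : C} (f : X ⟶ Y) (hX : X ∈ extClass TT.T S) (hY : Y ∈ extClass S TT.F) :
    IsTrivialMor S f := by
  obtain ⟨T₀, S₀, u, g, hT₀, hS₀, hses1⟩ := hX
  obtain ⟨S₁, F₁, v, p, hS₁, hF₁, hses2⟩ := hY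
  obtain ⟨I, e, m, he, hm, hef⟩ := hFac f
  obtain ⟨TI, FI, t, q, hTI, hFI, hsesI⟩ := TT.exists_seq I
  -- TI ∈ S: it embeds into S₁
  have hTIS : TI ∈ S := by
    have hz : (t ≫ m) ≫ p = 0 := TT.hom_zero hTI hF₁ _
    obtain ⟨c, hc, -⟩ := hses2.ker (t ≫ m) hz
    have hmono : Mono (c ≫ v) := by
      rw [hc]
      have := hsesI.mono_f
      exact mono_comp t m
    have : Mono c := mono_of_mono c v
    exact hS.1 c this hS₁
  -- FI ∈ S: it is a quotient of S₀
  have hFIS : FI ∈ S := by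
    have hz : u ≫ e ≫ q = 0 := TT.hom_zero hT₀ hFI _
    obtain ⟨b, hb, -⟩ := hses1.coker (e ≫ q) hz
    have hepi : Epi (g ≫ b) := by
      rw [hb]
      have := hsesI.epi_g
      exact epi_comp e q
    have : Epi b := epi_of_epi g b
    exact hS.2.1 b this hS₀
  have hIS : I ∈ S := hS.2.2 t q hsesI hTIS hFIS
  exact ⟨I, e, m, hIS, hef⟩
end

section
/- Let C be an additive category, (T, F) a pretorsion theory with trivial class Z, and Σ : C → C/Z the additive quotient functor by the ideal of Z-trivial morphisms. If TA →ε A →η FA is a short Z-exact sequence, then Σε is a kernel of Ση in C/Z (and dually Ση is a cokernel of Σε). -/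
open CategoryTheory CategoryTheory.Limits

universe v u

variable {C : Type u} [Category.{v} C]

/-!
Write `Z = T ∩ F`. The `Z`-trivial morphisms form an ideal, and it is closed under sums because
`Z` is closed under binary biproducts: for `W₁, W₂ ∈ Z` the inclusions and projections of
`W₁ ⊞ W₂` are `Z`-trivial, so they split the `Z`-kernel and the `Z`-cokernel of the pretorsion
sequence of `W₁ ⊞ W₂`, which are therefore isomorphisms. Hence `trivRel Z` is a congruence and
`σ f = σ g` exactly when `f - g` is `Z`-trivial. A morphism `σ l` with `σ l ≫ σ η = 0` then lifts
along `ε` by the universal property of the `Z`-kernel, and the lift is unique because `σ ε` is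
mono: if `t ≫ ε = p ≫ q` with `q : V ⟶ A` and `V ∈ Z`, then `q` lifts along `ε`, so `t`
factors through `V` as well. The cokernel half is dual.
-/

namespace IsTrivialMor

variable {Z : Set C}

lemma comp_left {X Y W : C} (f : X ⟶ Y) {g : Y ⟶ W} (hg : IsTrivialMor Z g) :
    IsTrivialMor Z (f ≫ g) := by
  obtain ⟨V, p, q, hV, rfl⟩ := hg
  exact ⟨V, f ≫ p, q, hV, Category.assoc _ _ _⟩

lemma comp_right {X Y W : C} {f : X ⟶ Y} (hf : IsTrivialMor Z f) (g : Y ⟶ W) :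
    IsTrivialMor Z (f ≫ g) := by
  obtain ⟨V, p, q, hV, rfl⟩ := hf
  exact ⟨V, p, q ≫ g, hV, (Category.assoc _ _ _).symm⟩

lemma of_mem_source {X Y : C} (hX : X ∈ Z) (f : X ⟶ Y) : IsTrivialMor Z f :=
  ⟨X, 𝟙 X, f, hX, Category.id_comp f⟩

lemma of_mem_target {X Y : C} (hY : Y ∈ Z) (f : X ⟶ Y) : IsTrivialMor Z f :=
  ⟨Y, f, 𝟙 Y, hY, Category.comp_id f⟩

lemma zero [HasZeroMorphisms C] {W : C} (hW : W ∈ Z) (X Y : C) :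
    IsTrivialMor Z (0 : X ⟶ Y) :=
  ⟨W, 0, 0, hW, comp_zero⟩

lemma neg [Preadditive C] {X Y : C} {f : X ⟶ Y} (hf : IsTrivialMor Z f) :
    IsTrivialMor Z (-f) := by
  obtain ⟨V, p, q, hV, rfl⟩ := hf
  exact ⟨V, -p, q, hV, Preadditive.neg_comp _ _⟩

lemma add [Preadditive C] [HasBinaryBiproducts C]
    (hZ : ∀ ⦃W₁ W₂ : C⦄, W₁ ∈ Z → W₂ ∈ Z → (W₁ ⊞ W₂) ∈ Z) {X Y : C} {f g : X ⟶ Y}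
    (hf : IsTrivialMor Z f) (hg : IsTrivialMor Z g) : IsTrivialMor Z (f + g) := by
  obtain ⟨V, p, q, hV, rfl⟩ := hf
  obtain ⟨V', p', q', hV', rfl⟩ := hg
  exact ⟨V ⊞ V', biprod.lift p p', biprod.desc q q', hZ hV hV', biprod.lift_desc⟩

end IsTrivialMor

namespace IsZKernel

variable {Z : Set C} {K A B : C} {ε : K ⟶ A} {η : A ⟶ B}

lemma mono (h : IsZKernel Z ε η) : Mono ε where
  right_cancellation a b hab := by
    obtain ⟨_, _, hu⟩ := h.2 (a ≫ ε) (by simpa using h.1.comp_left a)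
    rw [hu a rfl, hu b hab.symm]

lemma isTrivialMor_of_comp (h : IsZKernel Z ε η) {Y : C} {t : Y ⟶ K}
    (ht : IsTrivialMor Z (t ≫ ε)) : IsTrivialMor Z t := by
  obtain ⟨V, p, q, hV, hpq⟩ := ht
  obtain ⟨q', hq', -⟩ := h.2 q (.of_mem_source hV _)
  have := h.mono
  exact ⟨V, p, q', hV, by rw [← cancel_mono ε, Category.assoc, hq', hpq]⟩

lemma isIso_of_biprod [HasZeroMorphisms C] {W₁ W₂ : C} [HasBinaryBiproduct W₁ W₂]
    (hW₁ : W₁ ∈ Z) (hW₂ : W₂ ∈ Z) {ε : K ⟶ W₁ ⊞ W₂} {η : W₁ ⊞ W₂ ⟶ B}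
    (h : IsZKernel Z ε η) : IsIso ε := by
  obtain ⟨u₁, hu₁, -⟩ := h.2 biprod.inl (.of_mem_source hW₁ _)
  obtain ⟨u₂, hu₂, -⟩ := h.2 biprod.inr (.of_mem_source hW₂ _)
  have := h.mono
  have : IsSplitEpi ε := ⟨⟨biprod.desc u₁ u₂, by ext <;> simp [hu₁, hu₂]⟩⟩
  exact isIso_of_mono_of_isSplitEpi ε

end IsZKernel

namespace IsZCokernel

variable {Z : Set C} {A B Q : C} {ε : A ⟶ B} {η : B ⟶ Q}

lemma epi (h : IsZCokernel Z ε η) : Epi η where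
  left_cancellation a b hab := by
    obtain ⟨_, _, hu⟩ := h.2 (η ≫ a) (by simpa using h.1.comp_right a)
    rw [hu a rfl, hu b hab.symm]

lemma isTrivialMor_of_comp (h : IsZCokernel Z ε η) {Y : C} {t : Q ⟶ Y}
    (ht : IsTrivialMor Z (η ≫ t)) : IsTrivialMor Z t := by
  obtain ⟨V, p, q, hV, hpq⟩ := ht
  obtain ⟨p', hp', -⟩ := h.2 p (.of_mem_target hV _)
  have := h.epi
  exact ⟨V, p', q, hV, by rw [← cancel_epi η, ← Category.assoc, hp', hpq]⟩

lemma isIso_of_biprod [HasZeroMorphisms C] {W₁ W₂ : C} [HasBinaryBiproduct W₁ W₂]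
    (hW₁ : W₁ ∈ Z) (hW₂ : W₂ ∈ Z) {ε : A ⟶ W₁ ⊞ W₂} {η : W₁ ⊞ W₂ ⟶ Q}
    (h : IsZCokernel Z ε η) : IsIso η := by
  obtain ⟨v₁, hv₁, -⟩ := h.2 biprod.fst (.of_mem_target hW₁ _)
  obtain ⟨v₂, hv₂, -⟩ := h.2 biprod.snd (.of_mem_target hW₂ _)
  have := h.epi
  have : IsSplitMono η := ⟨⟨biprod.lift v₁ v₂, by ext <;> simp [hv₁, hv₂]⟩⟩
  exact isIso_of_epi_of_isSplitMono η

end IsZCokernel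

namespace PretorsionTheory

variable (P : PretorsionTheory C)

lemma exists_mem_inter (X : C) : ∃ W, W ∈ P.T ∩ P.F := by
  obtain ⟨_, _, f, g, hA, hB, -⟩ := P.exists_seq X
  obtain ⟨W, -, -, hW, -⟩ := P.hom_triv hA hB (f ≫ g)
  exact ⟨W, hW⟩

lemma biprod_mem_inter [HasZeroMorphisms C] {W₁ W₂ : C} [HasBinaryBiproduct W₁ W₂]
    (hW₁ : W₁ ∈ P.T ∩ P.F) (hW₂ : W₂ ∈ P.T ∩ P.F) : (W₁ ⊞ W₂) ∈ P.T ∩ P.F := by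
  obtain ⟨_, _, f, g, hA, hB, hker, hcoker⟩ := P.exists_seq (W₁ ⊞ W₂)
  have := hker.isIso_of_biprod hW₁ hW₂
  have := hcoker.isIso_of_biprod hW₁ hW₂
  exact ⟨P.repleteT (asIso f) hA, P.repleteF (asIso g).symm hB⟩

instance trivRel_congruence [Preadditive C] [HasBinaryBiproducts C] :
    Congruence (trivRel (P.T ∩ P.F)) where
  equivalence {X _} :=
    { refl f := by
        obtain ⟨W, hW⟩ := P.exists_mem_inter X
        simpa [trivRel] using IsTrivialMor.zero hW _ _
      symm := fun h => by simpa [trivRel] using h.neg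
      trans := fun h₁ h₂ => by
        simpa [trivRel] using IsTrivialMor.add (fun _ _ => P.biprod_mem_inter) h₁ h₂ }
  comp_left f _ _ h := by
    simpa [trivRel, Preadditive.comp_sub] using h.comp_left f
  comp_right g h := by
    simpa [trivRel, Preadditive.sub_comp] using h.comp_right g

end PretorsionTheory

section Quotient

variable [Preadditive C] {Z : Set C} [Congruence (trivRel Z)]

local notation "σ" => Quotient.functor (trivRel Z)

lemma quotient_functor_map_eq_zero_iff {X Y : C} (f : X ⟶ Y) :
    (σ).map f = (σ).map 0 ↔ IsTrivialMor Z f := by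
  rw [Quotient.functor_map_eq_iff]
  simp [trivRel]

variable {TA A FA : C} {ε : TA ⟶ A} {η : A ⟶ FA}

lemma IsZKernel.mono_functor_map (hk : IsZKernel Z ε η) : Mono ((σ).map ε) where
  right_cancellation a b hab := by
    obtain ⟨a, rfl⟩ := (σ).map_surjective a
    obtain ⟨b, rfl⟩ := (σ).map_surjective b
    rw [← Functor.map_comp, ← Functor.map_comp, Quotient.functor_map_eq_iff] at hab
    rw [Quotient.functor_map_eq_iff]
    exact hk.isTrivialMor_of_comp (by rw [Preadditive.sub_comp]; exact hab)

lemma IsZCokernel.epi_functor_map (hc : IsZCokernel Z ε η) : Epi ((σ).map η) where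
  left_cancellation a b hab := by
    obtain ⟨a, rfl⟩ := (σ).map_surjective a
    obtain ⟨b, rfl⟩ := (σ).map_surjective b
    rw [← Functor.map_comp, ← Functor.map_comp, Quotient.functor_map_eq_iff] at hab
    rw [Quotient.functor_map_eq_iff]
    exact hc.isTrivialMor_of_comp (by rw [Preadditive.comp_sub]; exact hab)

lemma IsZKernel.existsUnique_functor_map_lift (hk : IsZKernel Z ε η) {W : C}
    (h : (σ).obj W ⟶ (σ).obj A) (hh : h ≫ (σ).map η = (σ).map 0) :
    ∃! k : (σ).obj W ⟶ (σ).obj TA, k ≫ (σ).map ε = h := by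
  obtain ⟨l, rfl⟩ := (σ).map_surjective h
  rw [← Functor.map_comp, quotient_functor_map_eq_zero_iff] at hh
  obtain ⟨l', hl', -⟩ := hk.2 l hh
  have := hk.mono_functor_map
  refine ⟨(σ).map l', ?_, fun k hk' => ?_⟩
  · dsimp only
    rw [← Functor.map_comp, hl']
  · rw [← cancel_mono ((σ).map ε), hk', ← Functor.map_comp, hl']

lemma IsZCokernel.existsUnique_functor_map_desc (hc : IsZCokernel Z ε η) {W : C}
    (h : (σ).obj A ⟶ (σ).obj W) (hh : (σ).map ε ≫ h = (σ).map 0) :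
    ∃! k : (σ).obj FA ⟶ (σ).obj W, (σ).map η ≫ k = h := by
  obtain ⟨l, rfl⟩ := (σ).map_surjective h
  rw [← Functor.map_comp, quotient_functor_map_eq_zero_iff] at hh
  obtain ⟨l', hl', -⟩ := hc.2 l hh
  have := hc.epi_functor_map
  refine ⟨(σ).map l', ?_, fun k hk' => ?_⟩
  · dsimp only
    rw [← Functor.map_comp, hl']
  · rw [← cancel_epi ((σ).map η), hk', ← Functor.map_comp, hl']

end Quotient

theorem stmt11_general [Preadditive C] [HasFiniteBiproducts C]
    (P : PretorsionTheory C) {TA A FA : C} (ε : TA ⟶ A) (η : A ⟶ FA)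
    (hk : IsZKernel (P.T ∩ P.F) ε η) (hc : IsZCokernel (P.T ∩ P.F) ε η) :
    letI σ := Quotient.functor (trivRel (P.T ∩ P.F))
    (σ.map ε ≫ σ.map η = σ.map (0 : TA ⟶ FA)) ∧
    (∀ (W : C) (h : σ.obj W ⟶ σ.obj A), h ≫ σ.map η = σ.map (0 : W ⟶ FA) →
      ∃! k : σ.obj W ⟶ σ.obj TA, k ≫ σ.map ε = h) ∧
    (∀ (W : C) (h : σ.obj A ⟶ σ.obj W), σ.map ε ≫ h = σ.map (0 : TA ⟶ W) →
      ∃! k : σ.obj FA ⟶ σ.obj W, σ.map η ≫ k = h) := by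
  have : HasBinaryBiproducts C := hasBinaryBiproducts_of_finite_biproducts C
  refine ⟨?_, fun W h hh => hk.existsUnique_functor_map_lift h hh,
    fun W h hh => hc.existsUnique_functor_map_desc h hh⟩
  rw [← Functor.map_comp, quotient_functor_map_eq_zero_iff]
  exact hk.1

theorem stmt11 [Preadditive C] [HasZeroObject C] [HasFiniteBiproducts C]
    (P : PretorsionTheory C) {TA A FA : C} (ε : TA ⟶ A) (η : A ⟶ FA)
    (hk : IsZKernel (P.T ∩ P.F) ε η) (hc : IsZCokernel (P.T ∩ P.F) ε η) :
    letI σ := Quotient.functor (trivRel (P.T ∩ P.F))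
    (σ.map ε ≫ σ.map η = σ.map (0 : TA ⟶ FA)) ∧
    (∀ (W : C) (h : σ.obj W ⟶ σ.obj A), h ≫ σ.map η = σ.map (0 : W ⟶ FA) →
      ∃! k : σ.obj W ⟶ σ.obj TA, k ≫ σ.map ε = h) ∧
    (∀ (W : C) (h : σ.obj A ⟶ σ.obj W), σ.map ε ≫ h = σ.map (0 : TA ⟶ W) →
      ∃! k : σ.obj FA ⟶ σ.obj W, σ.map η ≫ k = h) :=
  stmt11_general P ε η hk hc
end

section
/- The class S of torsion abelian groups is a Serre subcategory of the category of abelian groups, but the class S ∗ V, where V is the class of reduced abelian groups, is not closed under arbitrary products: the product over ℕ of copies of ℚ/ℤ does not lie in S ∗ V. -/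
/-- An abelian group is reduced if it has no non-zero divisible subgroup. -/
def IsReducedAddGroup (A : Type*) [AddCommGroup A] : Prop :=
  ∀ B : AddSubgroup A, (∀ b ∈ B, ∀ n : ℕ, 0 < n → ∃ c ∈ B, n • c = b) → B = ⊥

/-- The abelian group `ℚ/ℤ`. -/
abbrev QModZ : Type := ℚ ⧸ AddSubgroup.zmultiples (1 : ℚ)

/-!
Let `X = ∏ ℚ/ℤ`. If `0 → A → X → B → 0` with `A` torsion and `B` reduced, then `B` is
divisible as a quotient of the divisible group `X`, so `B = 0` and `X = A` is torsion. But the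
element `(1/(i+1))ᵢ` of `X` has coordinates of unbounded order.
-/

theorem IsReducedAddGroup.subsingleton {A : Type*} [AddCommGroup A] [DivisibleBy A ℕ]
    (h : IsReducedAddGroup A) : Subsingleton A := by
  have htop : (⊤ : AddSubgroup A) = ⊥ := h ⊤ fun b _ n hn =>
    ⟨DivisibleBy.div b n, trivial, DivisibleBy.div_cancel b hn.ne'⟩
  exact AddSubgroup.subsingleton_iff.mp (subsingleton_of_bot_eq_top htop.symm)

theorem IsAddTorsion.of_isReducedAddGroup_quotient {X : Type*} [AddCommGroup X]
    [DivisibleBy X ℕ] {A : AddSubgroup X} (hA : IsAddTorsion A)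
    (hred : IsReducedAddGroup (X ⧸ A)) : IsAddTorsion X := by
  have hAtop : A = ⊤ := QuotientAddGroup.subsingleton_iff.mp hred.subsingleton
  subst hAtop
  exact fun x => AddSubmonoid.isOfFinAddOrder_coe.mpr (hA ⟨x, trivial⟩)

noncomputable instance Rat.instDivisibleByNat : DivisibleBy ℚ ℕ :=
  AddGroup.divisibleByNatOfDivisibleByInt ℚ

theorem QModZ.mk_ne_zero {q : ℚ} (h0 : 0 < q) (h1 : q < 1) : (q : QModZ) ≠ 0 := by
  rw [Ne, QuotientAddGroup.eq_zero_iff, AddSubgroup.mem_zmultiples_iff]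
  rintro ⟨k, rfl⟩
  rw [zsmul_eq_mul, mul_one] at h0 h1
  norm_cast at h0 h1
  omega

theorem QModZ.not_isAddTorsion_pi : ¬ IsAddTorsion (ℕ → QModZ) := by
  intro h
  obtain ⟨n, hn, hx⟩ := (h fun i => ((1 / (i + 1) : ℚ) : QModZ)).exists_nsmul_eq_zero
  have hxn := congrFun hx n
  rw [Pi.smul_apply, Pi.zero_apply, ← QuotientAddGroup.mk_nsmul, nsmul_eq_mul] at hxn
  refine QModZ.mk_ne_zero ?_ ?_ hxn
  · positivity
  · rw [mul_one_div, div_lt_one (by positivity)]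
    exact_mod_cast n.lt_succ_self

theorem stmt16 :
    -- torsion abelian groups are closed under subobjects
    (∀ (X : Type) [AddCommGroup X] (B : AddSubgroup X),
      AddMonoid.IsTorsion X → AddMonoid.IsTorsion B) ∧
    -- closed under quotients
    (∀ (X : Type) [AddCommGroup X] (B : AddSubgroup X),
      AddMonoid.IsTorsion X → AddMonoid.IsTorsion (X ⧸ B)) ∧
    -- closed under extensions
    (∀ (X : Type) [AddCommGroup X] (B : AddSubgroup X),
      AddMonoid.IsTorsion B → AddMonoid.IsTorsion (X ⧸ B) → AddMonoid.IsTorsion X) ∧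
    -- ∏_{i ∈ ℕ} ℚ/ℤ is not an extension of a torsion group by a reduced group
    ¬ ∃ A : AddSubgroup (ℕ → QModZ),
        AddMonoid.IsTorsion A ∧ IsReducedAddGroup ((ℕ → QModZ) ⧸ A) := by
  refine ⟨fun X _ B hX => hX.addSubgroup B,
    fun X _ B hX => hX.of_surjective (QuotientAddGroup.mk'_surjective B),
    fun X _ B hB hQ => IsAddTorsion.extension_closed (QuotientAddGroup.ker_mk' B).symm hQ hB, ?_⟩
  rintro ⟨A, hA, hred⟩
  exact QModZ.not_isAddTorsion_pi (hA.of_isReducedAddGroup_quotient hred)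
end
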